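/- Correctness of the per-example calibrated confidence (special case of Theorem 1 underlying the Hoki algorithm): in the product-space model, suppose that for each bin index j, for (ν)-almost every ω₁ with g(x(ω₁)) ∈ P_j, the calibrator satisfies g(x(ω₁)) = (α_j − β_j) · γ(x(ω₁)) + β_j, where for each j the constants α_j, β_j are defined (with μ = ν ⊗ ρ, E = {f ∘ X' = f ∘ X}, C = {f ∘ X = Y ∘ fst}, A_j = {g ∘ X ∈ P_j}) by α_j = μ[C | E ∩ A_j] and β_j = μ[C | Eᶜ ∩ A_j]. Then CE(g) = 0. -/

import Mathlib

open MeasureTheory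

/-- Conditional probability of `E` given the event `A`, taken to be `0` when `A` is `μ`-null. -/
noncomputable def condProbE {Ω : Type*} [MeasurableSpace Ω] (μ : Measure Ω)
    (E A : Set Ω) : ℝ :=
  if μ A = 0 then 0 else (μ (E ∩ A)).toReal / (μ A).toReal

/-- Conditional expectation of `h` given the event `A`, taken to be `0` when `A` is `μ`-null. -/
noncomputable def condMeanE {Ω : Type*} [MeasurableSpace Ω] (μ : Measure Ω)
    (h : Ω → ℝ) (A : Set Ω) : ℝ :=
  if μ A = 0 then 0 else (∫ ω in A, h ω ∂μ) / (μ A).toReal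

/-! Fix a bin `A = {g ∘ X ∈ P j}` and let `E` be the event that the transformation keeps the
predicted label. Splitting on `E`,
`μ(C ∩ A) = α μ(E ∩ A) + β μ(Eᶜ ∩ A) = (α - β) μ(E ∩ A) + β μ(A)`.
By Fubini, `μ(E ∩ A)` is the `ν`-integral of `γ ∘ x` over the bin, so the right-hand side is
the integral over the bin of `(α - β) γ ∘ x + β`, which is `∫_A g ∘ X dμ` by the calibration
hypothesis. Hence accuracy and mean confidence agree on every bin. -/

open Set

section CondProb

variable {Ω : Type*} [MeasurableSpace Ω] (μ : Measure Ω)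

lemma condProbE_eq_condMeanE_of_measureReal_inter_eq {C A : Set Ω} {h : Ω → ℝ}
    (hCA : μ.real (C ∩ A) = ∫ ω in A, h ω ∂μ) :
    condProbE μ C A = condMeanE μ h A := by
  unfold condProbE condMeanE
  rw [← measureReal_def, hCA]

variable [IsFiniteMeasure μ]

lemma condProbE_mul_measureReal (E A : Set Ω) :
    condProbE μ E A * μ.real A = μ.real (E ∩ A) := by
  unfold condProbE
  split_ifs with hA
  · simp [measureReal_def, measure_inter_null_of_null_right E hA]
  · exact div_mul_cancel₀ _ ((measureReal_ne_zero_iff).mpr hA)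

lemma measureReal_inter_add_compl_inter {E : Set Ω} (hE : MeasurableSet E) (A : Set Ω) :
    μ.real (E ∩ A) + μ.real (Eᶜ ∩ A) = μ.real A := by
  rw [inter_comm E, inter_comm Eᶜ, ← sdiff_eq]
  exact measureReal_inter_add_sdiff hE

lemma measureReal_inter_eq_condProbE_mul_add {E : Set Ω} (hE : MeasurableSet E) (C A : Set Ω) :
    μ.real (C ∩ A) = condProbE μ C (E ∩ A) * μ.real (E ∩ A)
      + condProbE μ C (Eᶜ ∩ A) * μ.real (Eᶜ ∩ A) := by
  rw [condProbE_mul_measureReal, condProbE_mul_measureReal, inter_left_comm C E,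
    inter_left_comm C Eᶜ]
  exact (measureReal_inter_add_compl_inter μ hE _).symm

end CondProb

section Product

variable {Ω₁ Ω₂ : Type*} [MeasurableSpace Ω₁] [MeasurableSpace Ω₂]
  (ν : Measure Ω₁) (ρ : Measure Ω₂)

lemma measureReal_prod_inter_fst_preimage [SFinite ν] [IsFiniteMeasure ρ]
    {E : Set (Ω₁ × Ω₂)} (hE : MeasurableSet E) (B : Set Ω₁) :
    (ν.prod ρ).real (E ∩ Prod.fst ⁻¹' B) =
      ∫ ω₁ in B, ρ.real (Prod.mk ω₁ ⁻¹' E) ∂ν := by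
  rw [← prod_univ, measureReal_def, ← Measure.restrict_apply hE,
    ← Measure.restrict_prod_eq_prod_univ, Measure.prod_apply hE]
  exact (integral_toReal (measurable_measure_prodMk_left hE).aemeasurable
    (ae_of_all _ fun _ => measure_lt_top _ _)).symm

lemma setIntegral_fst_preimage_comp_fst [SFinite ν] [IsProbabilityMeasure ρ]
    (B : Set Ω₁) (c : Ω₁ → ℝ) :
    ∫ ω in Prod.fst ⁻¹' B, c ω.1 ∂ν.prod ρ = ∫ ω₁ in B, c ω₁ ∂ν := by
  rw [← prod_univ, ← Measure.restrict_prod_eq_prod_univ, integral_fun_fst, probReal_univ,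
    one_smul]

lemma condProbE_fst_preimage_eq_condMeanE [IsFiniteMeasure ν] [IsProbabilityMeasure ρ]
    {E : Set (Ω₁ × Ω₂)} (hE : MeasurableSet E) (C : Set (Ω₁ × Ω₂))
    {B : Set Ω₁} (hB : MeasurableSet B) {c : Ω₁ → ℝ}
    (hc : ∀ᵐ ω₁ ∂ν, ω₁ ∈ B → c ω₁ =
      (condProbE (ν.prod ρ) C (E ∩ Prod.fst ⁻¹' B) -
          condProbE (ν.prod ρ) C (Eᶜ ∩ Prod.fst ⁻¹' B)) * ρ.real (Prod.mk ω₁ ⁻¹' E) +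
        condProbE (ν.prod ρ) C (Eᶜ ∩ Prod.fst ⁻¹' B)) :
    condProbE (ν.prod ρ) C (Prod.fst ⁻¹' B) =
      condMeanE (ν.prod ρ) (fun ω => c ω.1) (Prod.fst ⁻¹' B) := by
  have hmassA : (ν.prod ρ).real (Prod.fst ⁻¹' B) = ν.real B := by
    rw [← prod_univ, measureReal_prod_prod, probReal_univ, mul_one]
  set μ := ν.prod ρ
  set A := Prod.fst ⁻¹' B
  set α := condProbE μ C (E ∩ A)
  set β := condProbE μ C (Eᶜ ∩ A)
  have hsection : Integrable (fun ω₁ => ρ.real (Prod.mk ω₁ ⁻¹' E)) (ν.restrict B) :=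
    Measure.integrable_measure_prodMk_left hE (measure_ne_top _ _)
  apply condProbE_eq_condMeanE_of_measureReal_inter_eq
  calc μ.real (C ∩ A)
      = α * μ.real (E ∩ A) + β * μ.real (Eᶜ ∩ A) :=
        measureReal_inter_eq_condProbE_mul_add μ hE C A
    _ = (α - β) * μ.real (E ∩ A) + β * μ.real A := by
      rw [← measureReal_inter_add_compl_inter μ hE A]; ring
    _ = (α - β) * ∫ ω₁ in B, ρ.real (Prod.mk ω₁ ⁻¹' E) ∂ν + β * ν.real B := by
      rw [measureReal_prod_inter_fst_preimage ν ρ hE, hmassA]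
    _ = ∫ ω₁ in B, c ω₁ ∂ν := by
      rw [setIntegral_congr_ae hB hc, integral_add (hsection.const_mul _) (integrable_const _),
        integral_const_mul, setIntegral_const, smul_eq_mul, mul_comm β]
    _ = ∫ ω in A, c ω.1 ∂μ := (setIntegral_fst_preimage_comp_fst ν ρ B c).symm

end Product

theorem per_example_calibrated_confidence_perfect_general
    {𝒳 𝒴 : Type*} [MeasurableSpace 𝒳] [MeasurableSpace 𝒴]
    [Countable 𝒴] [MeasurableSingletonClass 𝒴]
    (f : 𝒳 → 𝒴) (hf : Measurable f)
    (g : 𝒳 → ℝ) (hg : Measurable g)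
    (J : ℕ) (P : Fin J → Set ℝ)
    (hPmeas : ∀ j, MeasurableSet (P j))
    {Ω₁ Ω₂ : Type*} [MeasurableSpace Ω₁] [MeasurableSpace Ω₂]
    (ν : Measure Ω₁) (ρ : Measure Ω₂)
    [IsProbabilityMeasure ν] [IsProbabilityMeasure ρ]
    (x : Ω₁ → 𝒳) (hx : Measurable x) (Y : Ω₁ → 𝒴)
    (h : 𝒳 × Ω₂ → 𝒳) (hh : Measurable h)
    (γ : 𝒳 → ℝ) (hγ : ∀ s : 𝒳, γ s = (ρ {ω₂ | f (h (s, ω₂)) = f s}).toReal)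
    (hcal : ∀ j : Fin J, ∀ᵐ ω₁ ∂ν, g (x ω₁) ∈ P j →
      g (x ω₁) =
        (condProbE (ν.prod ρ) {ω : Ω₁ × Ω₂ | f (x ω.1) = Y ω.1}
            ({ω : Ω₁ × Ω₂ | f (h (x ω.1, ω.2)) = f (x ω.1)} ∩
              {ω : Ω₁ × Ω₂ | g (x ω.1) ∈ P j}) -
          condProbE (ν.prod ρ) {ω : Ω₁ × Ω₂ | f (x ω.1) = Y ω.1}
            ({ω : Ω₁ × Ω₂ | f (h (x ω.1, ω.2)) = f (x ω.1)}ᶜ ∩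
              {ω : Ω₁ × Ω₂ | g (x ω.1) ∈ P j})) * γ (x ω₁) +
        condProbE (ν.prod ρ) {ω : Ω₁ × Ω₂ | f (x ω.1) = Y ω.1}
          ({ω : Ω₁ × Ω₂ | f (h (x ω.1, ω.2)) = f (x ω.1)}ᶜ ∩
            {ω : Ω₁ × Ω₂ | g (x ω.1) ∈ P j})) :
    (∑ j : Fin J, ((ν.prod ρ) {ω : Ω₁ × Ω₂ | g (x ω.1) ∈ P j}).toReal *
        |condProbE (ν.prod ρ) {ω : Ω₁ × Ω₂ | f (x ω.1) = Y ω.1}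
            {ω : Ω₁ × Ω₂ | g (x ω.1) ∈ P j} -
          condMeanE (ν.prod ρ) (fun ω : Ω₁ × Ω₂ => g (x ω.1))
            {ω : Ω₁ × Ω₂ | g (x ω.1) ∈ P j}|) = 0 := by
  refine Finset.sum_eq_zero fun j _ => ?_
  have hE : MeasurableSet {ω : Ω₁ × Ω₂ | f (h (x ω.1, ω.2)) = f (x ω.1)} :=
    measurableSet_eq_fun (by fun_prop) (by fun_prop)
  have hB : MeasurableSet {ω₁ | g (x ω₁) ∈ P j} := hg.comp hx (hPmeas j)
  rw [mul_eq_zero, abs_eq_zero, sub_eq_zero]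
  refine Or.inr (condProbE_fst_preimage_eq_condMeanE ν ρ hE _ hB (c := g ∘ x) ?_)
  filter_upwards [hcal j] with ω₁ hcalω₁ hω₁
  rw [hγ] at hcalω₁
  exact hcalω₁ hω₁

/-- Correctness of the per-example calibrated confidence (special case of Theorem 1
underlying the Hoki algorithm): in the product-space model, if for each bin `j` and
`ν`-almost every input in the bin the calibrator satisfies
`g(x) = (α_j - β_j) · γ(x) + β_j`, then `CE(g) = 0`. -/
theorem per_example_calibrated_confidence_perfect
    {𝒳 𝒴 : Type*} [MeasurableSpace 𝒳] [MeasurableSpace 𝒴]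
    [Countable 𝒴] [MeasurableSingletonClass 𝒴]
    (f : 𝒳 → 𝒴) (hf : Measurable f)
    (g : 𝒳 → ℝ) (hg : Measurable g) (hg01 : ∀ s, g s ∈ Set.Icc (0 : ℝ) 1)
    (J : ℕ) (hJ : 0 < J) (P : Fin J → Set ℝ)
    (hPmeas : ∀ j, MeasurableSet (P j))
    (hPdisj : Pairwise (Function.onFun Disjoint P))
    (hPcover : Set.Icc (0 : ℝ) 1 ⊆ ⋃ j, P j)
    {Ω₁ Ω₂ : Type*} [MeasurableSpace Ω₁] [MeasurableSpace Ω₂]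
    (ν : Measure Ω₁) (ρ : Measure Ω₂)
    [IsProbabilityMeasure ν] [IsProbabilityMeasure ρ]
    (x : Ω₁ → 𝒳) (hx : Measurable x) (Y : Ω₁ → 𝒴) (hY : Measurable Y)
    (h : 𝒳 × Ω₂ → 𝒳) (hh : Measurable h)
    (γ : 𝒳 → ℝ) (hγ : ∀ s : 𝒳, γ s = (ρ {ω₂ | f (h (s, ω₂)) = f s}).toReal)
    (hcal : ∀ j : Fin J, ∀ᵐ ω₁ ∂ν, g (x ω₁) ∈ P j →
      g (x ω₁) =
        (condProbE (ν.prod ρ) {ω : Ω₁ × Ω₂ | f (x ω.1) = Y ω.1}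
            ({ω : Ω₁ × Ω₂ | f (h (x ω.1, ω.2)) = f (x ω.1)} ∩
              {ω : Ω₁ × Ω₂ | g (x ω.1) ∈ P j}) -
          condProbE (ν.prod ρ) {ω : Ω₁ × Ω₂ | f (x ω.1) = Y ω.1}
            ({ω : Ω₁ × Ω₂ | f (h (x ω.1, ω.2)) = f (x ω.1)}ᶜ ∩
              {ω : Ω₁ × Ω₂ | g (x ω.1) ∈ P j})) * γ (x ω₁) +
        condProbE (ν.prod ρ) {ω : Ω₁ × Ω₂ | f (x ω.1) = Y ω.1}
          ({ω : Ω₁ × Ω₂ | f (h (x ω.1, ω.2)) = f (x ω.1)}ᶜ ∩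
            {ω : Ω₁ × Ω₂ | g (x ω.1) ∈ P j})) :
    (∑ j : Fin J, ((ν.prod ρ) {ω : Ω₁ × Ω₂ | g (x ω.1) ∈ P j}).toReal *
        |condProbE (ν.prod ρ) {ω : Ω₁ × Ω₂ | f (x ω.1) = Y ω.1}
            {ω : Ω₁ × Ω₂ | g (x ω.1) ∈ P j} -
          condMeanE (ν.prod ρ) (fun ω : Ω₁ × Ω₂ => g (x ω.1))
            {ω : Ω₁ × Ω₂ | g (x ω.1) ∈ P j}|) = 0 :=
  per_example_calibrated_confidence_perfect_general f hf g hg J P hPmeas ν ρ x hx Y h hh γ hγ hcal
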